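/- Let S be a unital ring, σ injective, δ a left σ-derivation, and f ∈ S[t;σ,δ] monic of degree m ≥ 2 such that S_f is not associative. Then S is contained in both the left nucleus and the middle nucleus of S_f, and the right nucleus of S_f equals {g ∈ R : deg(g) < m and fg ∈ Rf}. -/

import Mathlib

/-- An abstract presentation of the skew polynomial ring `S[t;σ,δ]`:
a ring `R` together with an embedding of `S`, a variable `t` satisfying the
commutation rule `t·a = σ(a)·t + δ(a)`, such that the `t^i` form a basis of `R`
as a left `S`-module (encoded by the coefficient equivalence). -/
structure SkewPolyRing (S : Type*) (R : Type*) [Ring S] [Ring R]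
    (σ : S →+* S) (δ : S →+ S) : Type _ where
  ι : S →+* R
  t : R
  t_comm : ∀ a : S, t * ι a = ι (σ a) * t + ι (δ a)
  coeff : R ≃+ (ℕ →₀ S)
  coeff_symm : ∀ p : ℕ →₀ S, coeff.symm p = p.sum fun i a => ι a * t ^ i

namespace SkewPolyRing

variable {S R : Type*} [Ring S] [Ring R] {σ : S →+* S} {δ : S →+ S}

/-- `g` has degree `< m`. -/
def degLT (P : SkewPolyRing S R σ δ) (g : R) (m : ℕ) : Prop :=
  ∀ i, m ≤ i → P.coeff g i = 0

/-- The degree of a skew polynomial (with `deg 0 = 0` by convention). -/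
noncomputable def deg (P : SkewPolyRing S R σ δ) (g : R) : ℕ :=
  (P.coeff g).support.sup id

/-- `f` is monic of degree `m`. -/
def MonicDeg (P : SkewPolyRing S R σ δ) (f : R) (m : ℕ) : Prop :=
  P.coeff f m = 1 ∧ ∀ i, m < i → P.coeff f i = 0

/-- `modr` computes a remainder of right division by `f`. -/
def IsModr (P : SkewPolyRing S R σ δ) (f : R) (m : ℕ) (modr : R → R) : Prop :=
  ∀ g : R, P.degLT (modr g) m ∧ ∃ q : R, g = q * f + modr g

end SkewPolyRing


/-!
Right division by a monic `f` of degree `m ≥ 1` has unique remainders: if `q ≠ 0` then `q * f` has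
nonzero coefficient at `deg q + m`, so no nonzero multiple of `f` has degree `< m`. Hence `modr`
is additive and satisfies `modr (x * modr y) = modr (x * y)`; if moreover `f * g ∈ R * f`, then
also `modr (modr y * g) = modr (y * g)`, so both bracketings of `x * y * g` reduce to
`modr (x * y * g)`. Left multiplication by `a ∈ S` does not raise degrees, which puts `S` in the
left and middle nuclei. Conversely, `modr (t ^ m) = t ^ m - f`, so comparing the two bracketings
of `t ^ (m - 1) * t * g` leaves `modr (f * g) = 0`.
-/

namespace SkewPolyRing

variable {S R : Type*} [Ring S] [Ring R] {σ : S →+* S} {δ : S →+ S}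
variable (P : SkewPolyRing S R σ δ)

lemma coeff_monomial (a : S) (i : ℕ) :
    P.coeff (P.ι a * P.t ^ i) = Finsupp.single i a := by
  rw [← P.coeff.apply_symm_apply (Finsupp.single i a), P.coeff_symm,
    Finsupp.sum_single_index (by simp)]

lemma eq_sum_monomial (g : R) : g = (P.coeff g).sum fun i a => P.ι a * P.t ^ i := by
  rw [← P.coeff_symm, AddEquiv.symm_apply_apply]

lemma degLT_mono {g : R} {n k : ℕ} (h : P.degLT g n) (hnk : n ≤ k) : P.degLT g k :=
  fun i hi => h i (hnk.trans hi)

lemma degLT_add {u v : R} {n : ℕ} (hu : P.degLT u n) (hv : P.degLT v n) :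
    P.degLT (u + v) n := fun i hi => by
  rw [map_add, Finsupp.add_apply, hu i hi, hv i hi, add_zero]

lemma degLT_sub {u v : R} {n : ℕ} (hu : P.degLT u n) (hv : P.degLT v n) :
    P.degLT (u - v) n := fun i hi => by
  rw [map_sub, Finsupp.sub_apply, hu i hi, hv i hi, sub_zero]

lemma degLT_neg {u : R} {n : ℕ} (hu : P.degLT u n) : P.degLT (-u) n := fun i hi => by
  rw [map_neg, Finsupp.neg_apply, hu i hi, neg_zero]

lemma degLT_sum {A : Type*} (s : Finset A) (F : A → R) {n : ℕ}
    (h : ∀ i ∈ s, P.degLT (F i) n) : P.degLT (∑ i ∈ s, F i) n := fun j hj => by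
  rw [map_sum, Finset.sum_apply']
  exact Finset.sum_eq_zero fun i hi => h i hi j hj

lemma degLT_monomial (a : S) {i n : ℕ} (h : i < n) : P.degLT (P.ι a * P.t ^ i) n :=
  fun j hj => by rw [P.coeff_monomial, Finsupp.single_apply, if_neg (by omega)]

lemma degLT_t_pow {i n : ℕ} (h : i < n) : P.degLT (P.t ^ i) n := by
  simpa using P.degLT_monomial 1 h

lemma degLT_ι (a : S) : P.degLT (P.ι a) 1 := by
  simpa using P.degLT_monomial a zero_lt_one

lemma degLT_map {u : R} {n k : ℕ} (Φ : R →+ R) (hu : P.degLT u n)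
    (h : ∀ (a : S) (i : ℕ), i < n → P.degLT (Φ (P.ι a * P.t ^ i)) k) : P.degLT (Φ u) k := by
  rw [P.eq_sum_monomial u, Finsupp.sum, map_sum]
  refine P.degLT_sum _ _ fun i hi => h _ i ?_
  by_contra hin
  exact Finsupp.mem_support_iff.mp hi (hu i (not_lt.mp hin))

lemma degLT_ι_mul (a : S) {u : R} {n : ℕ} (hu : P.degLT u n) : P.degLT (P.ι a * u) n :=
  P.degLT_map (AddMonoidHom.mulLeft (P.ι a)) hu fun b i hi => by
    rw [AddMonoidHom.coe_mulLeft, ← mul_assoc, ← map_mul]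
    exact P.degLT_monomial _ hi

lemma degLT_t_mul {u : R} {n : ℕ} (hu : P.degLT u n) : P.degLT (P.t * u) (n + 1) :=
  P.degLT_map (AddMonoidHom.mulLeft P.t) hu fun a i hi => by
    rw [AddMonoidHom.coe_mulLeft, ← mul_assoc, P.t_comm, add_mul, mul_assoc, ← pow_succ']
    exact P.degLT_add (P.degLT_monomial _ (by omega)) (P.degLT_monomial _ (by omega))

lemma degLT_t_pow_mul {u : R} {n : ℕ} (k : ℕ) (hu : P.degLT u n) :
    P.degLT (P.t ^ k * u) (n + k) := by
  induction k with
  | zero => simpa using hu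
  | succ k ih =>
    rw [pow_succ', mul_assoc, ← add_assoc]
    exact P.degLT_t_mul ih

lemma degLT_mul {u v : R} {n k : ℕ} (hu : P.degLT u n) (hv : P.degLT v (k + 1)) :
    P.degLT (u * v) (n + k) :=
  P.degLT_map (AddMonoidHom.mulRight v) hu fun a i hi => by
    show P.degLT (P.ι a * P.t ^ i * v) _
    rw [mul_assoc]
    exact P.degLT_mono (P.degLT_ι_mul a (P.degLT_t_pow_mul i hv)) (by omega)

lemma degLT_sub_leading {u : R} {n : ℕ} (hu : P.degLT u (n + 1)) :
    P.degLT (u - P.ι (P.coeff u n) * P.t ^ n) n := fun i hi => by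
  rw [map_sub, Finsupp.sub_apply, P.coeff_monomial, Finsupp.single_apply]
  rcases hi.eq_or_lt with rfl | h
  · rw [if_pos rfl, sub_self]
  · rw [if_neg h.ne, hu i h, sub_zero]

lemma degLT_deg_succ (g : R) : P.degLT g (P.deg g + 1) := fun i hi => by
  by_contra hgi
  have := Finset.le_sup (f := id) (Finsupp.mem_support_iff.mpr hgi)
  simp only [deg, id] at this hi
  omega

lemma coeff_deg_ne_zero {g : R} (hg : g ≠ 0) : P.coeff g (P.deg g) ≠ 0 := by
  have hne : (P.coeff g).support.Nonempty :=
    Finsupp.support_nonempty_iff.mpr ((map_ne_zero_iff _ P.coeff.injective).mpr hg)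
  obtain ⟨i, hi, hdeg⟩ := Finset.exists_mem_eq_sup _ hne id
  rw [deg, hdeg]
  exact Finsupp.mem_support_iff.mp hi

variable {f : R} {m : ℕ} {modr : R → R}

lemma degLT_sub_t_pow_of_monicDeg (hf : P.MonicDeg f m) : P.degLT (f - P.t ^ m) m := by
  simpa [hf.1] using P.degLT_sub_leading (fun i hi => hf.2 i hi : P.degLT f (m + 1))

lemma coeff_mul_monicDeg (hf : P.MonicDeg f m) (hm : 0 < m) {u : R} {n : ℕ}
    (hu : P.degLT u (n + 1)) : P.coeff (u * f) (n + m) = P.coeff u n := by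
  obtain ⟨m, rfl⟩ : ∃ m', m = m' + 1 := ⟨m - 1, by omega⟩
  set a := P.coeff u n
  have hsplit : u * f = (u - P.ι a * P.t ^ n) * f
      + P.ι a * P.t ^ n * (f - P.t ^ (m + 1)) + P.ι a * P.t ^ (n + (m + 1)) := by
    rw [pow_add P.t n (m + 1)]
    noncomm_ring
  have hlow : P.coeff ((u - P.ι a * P.t ^ n) * f) (n + (m + 1)) = 0 :=
    P.degLT_mul (P.degLT_sub_leading hu) (fun i hi => hf.2 i hi) _ (by omega)
  have hmid : P.coeff (P.ι a * P.t ^ n * (f - P.t ^ (m + 1))) (n + (m + 1)) = 0 :=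
    P.degLT_mul (P.degLT_monomial a n.lt_succ_self) (P.degLT_sub_t_pow_of_monicDeg hf) _
      (by omega)
  rw [hsplit, P.coeff.map_add, P.coeff.map_add, Finsupp.add_apply, Finsupp.add_apply, hlow, hmid,
    P.coeff_monomial, Finsupp.single_eq_same, zero_add, zero_add]

lemma eq_zero_of_degLT_mul_monicDeg (hf : P.MonicDeg f m) (hm : 0 < m) {q : R}
    (h : P.degLT (q * f) m) : q = 0 := by
  by_contra hq
  apply P.coeff_deg_ne_zero hq
  rw [← P.coeff_mul_monicDeg hf hm (P.degLT_deg_succ q)]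
  exact h _ (by omega)

lemma modr_eq_of_eq_mul_add (hf : P.MonicDeg f m) (hm : 0 < m) (hmodr : P.IsModr f m modr)
    {g q r : R} (hg : g = q * f + r) (hr : P.degLT r m) : modr g = r := by
  obtain ⟨hdeg, q', hq'⟩ := hmodr g
  have hmul : (q' - q) * f = r - modr g := by
    rw [sub_mul, sub_eq_sub_iff_add_eq_add, ← hq', add_comm, ← hg]
  have hq : q' - q = 0 :=
    P.eq_zero_of_degLT_mul_monicDeg hf hm (hmul ▸ P.degLT_sub hr hdeg)
  rw [hq, zero_mul] at hmul
  exact (sub_eq_zero.mp hmul.symm).symm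

lemma modr_of_degLT (hf : P.MonicDeg f m) (hm : 0 < m) (hmodr : P.IsModr f m modr)
    {r : R} (hr : P.degLT r m) : modr r = r :=
  P.modr_eq_of_eq_mul_add hf hm hmodr (q := 0) (by rw [zero_mul, zero_add]) hr

lemma modr_sub (hf : P.MonicDeg f m) (hm : 0 < m) (hmodr : P.IsModr f m modr) (u v : R) :
    modr (u - v) = modr u - modr v := by
  obtain ⟨hu, qu, equ⟩ := hmodr u
  obtain ⟨hv, qv, eqv⟩ := hmodr v
  refine P.modr_eq_of_eq_mul_add hf hm hmodr (q := qu - qv) ?_ (P.degLT_sub hu hv)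
  conv_lhs => rw [equ, eqv]
  noncomm_ring

lemma modr_mul_modr (hf : P.MonicDeg f m) (hm : 0 < m) (hmodr : P.IsModr f m modr)
    (x y : R) : modr (x * modr y) = modr (x * y) := by
  obtain ⟨-, q, hq⟩ := hmodr y
  obtain ⟨hr, q', hq'⟩ := hmodr (x * modr y)
  symm
  refine P.modr_eq_of_eq_mul_add hf hm hmodr (q := x * q + q') ?_ hr
  conv_lhs => rw [hq, mul_add, hq']
  noncomm_ring

lemma modr_modr_mul (hf : P.MonicDeg f m) (hm : 0 < m) (hmodr : P.IsModr f m modr)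
    {g q₀ : R} (hg : f * g = q₀ * f) (y : R) : modr (modr y * g) = modr (y * g) := by
  obtain ⟨-, q, hq⟩ := hmodr y
  obtain ⟨hr, q', hq'⟩ := hmodr (modr y * g)
  symm
  refine P.modr_eq_of_eq_mul_add hf hm hmodr (q := q * q₀ + q') ?_ hr
  conv_lhs => rw [hq, add_mul, mul_assoc, hg, hq']
  noncomm_ring

lemma modr_ι_mul_assoc (hf : P.MonicDeg f m) (hm : 0 < m) (hmodr : P.IsModr f m modr)
    (a : S) {h : R} (hh : P.degLT h m) (k : R) :
    modr (modr (P.ι a * h) * k) = modr (P.ι a * modr (h * k)) := by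
  rw [P.modr_of_degLT hf hm hmodr (P.degLT_ι_mul a hh), P.modr_mul_modr hf hm hmodr, mul_assoc]

lemma modr_mul_ι_assoc (hf : P.MonicDeg f m) (hm : 0 < m) (hmodr : P.IsModr f m modr)
    (a : S) {g k : R} (hg : P.degLT g m) (hk : P.degLT k m) :
    modr (modr (g * P.ι a) * k) = modr (g * modr (P.ι a * k)) := by
  rw [P.modr_of_degLT hf hm hmodr (P.degLT_mul hg (P.degLT_ι a)),
    P.modr_of_degLT hf hm hmodr (P.degLT_ι_mul a hk), mul_assoc]

lemma modr_mul_assoc_iff (hf : P.MonicDeg f m) (hm : 2 ≤ m) (hmodr : P.IsModr f m modr)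
    (g : R) :
    (∀ x y : R, P.degLT x m → P.degLT y m →
        modr (modr (x * y) * g) = modr (x * modr (y * g))) ↔ ∃ q : R, f * g = q * f := by
  have hm₀ : 0 < m := by omega
  constructor
  · intro hassoc
    have htm : P.t ^ (m - 1) * P.t = P.t ^ m := by rw [← pow_succ, Nat.sub_add_cancel (by omega)]
    have hmodr_t_pow : modr (P.t ^ m) = P.t ^ m - f :=
      P.modr_eq_of_eq_mul_add hf hm₀ hmodr (q := 1) (by rw [one_mul, add_sub_cancel])
        (by simpa using P.degLT_neg (P.degLT_sub_t_pow_of_monicDeg hf))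
    have ht : P.degLT P.t m := by simpa using P.degLT_t_pow (i := 1) (n := m) (by omega)
    have h := hassoc (P.t ^ (m - 1)) P.t (P.degLT_t_pow (by omega)) ht
    rw [P.modr_mul_modr hf hm₀ hmodr, ← mul_assoc, htm, hmodr_t_pow, sub_mul,
      P.modr_sub hf hm₀ hmodr, sub_eq_self] at h
    obtain ⟨-, q, hq⟩ := hmodr (f * g)
    exact ⟨q, by rw [hq, h, add_zero]⟩
  · rintro ⟨q₀, hq₀⟩ x y - -
    rw [P.modr_modr_mul hf hm₀ hmodr hq₀, P.modr_mul_modr hf hm₀ hmodr, mul_assoc]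

end SkewPolyRing

theorem petit_nuclei_general {S R : Type*} [Ring S] [Ring R]
    (σ : S →+* S) (δ : S →+ S)
    (P : SkewPolyRing S R σ δ) (f : R) (m : ℕ) (hm : 2 ≤ m)
    (hf : P.MonicDeg f m) (modr : R → R) (hmodr : P.IsModr f m modr) :
    -- `S ⊆ Nuc_l(S_f)`:
    (∀ (a : S) (h k : R), P.degLT h m → P.degLT k m →
        modr (modr (P.ι a * h) * k) = modr (P.ι a * modr (h * k))) ∧
    -- `S ⊆ Nuc_m(S_f)`:
    (∀ (a : S) (g k : R), P.degLT g m → P.degLT k m →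
        modr (modr (g * P.ι a) * k) = modr (g * modr (P.ι a * k))) ∧
    -- `Nuc_r(S_f) = {g : deg g < m ∧ f·g ∈ R·f}`:
    (∀ g : R, P.degLT g m →
      ((∀ x y : R, P.degLT x m → P.degLT y m →
          modr (modr (x * y) * g) = modr (x * modr (y * g))) ↔
        ∃ q : R, f * g = q * f)) :=
  ⟨fun a _ k hh _ => P.modr_ι_mul_assoc hf (by omega) hmodr a hh k,
    fun a _ _ hg hk => P.modr_mul_ι_assoc hf (by omega) hmodr a hg hk,
    fun g _ => P.modr_mul_assoc_iff hf hm hmodr g⟩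

/-- If the Petit algebra `S_f` (for `f ∈ R = S[t;σ,δ]` monic of degree `m ≥ 2`) is not
associative, then `S` is contained in the left and middle nuclei of `S_f`, and the right
nucleus of `S_f` equals `{g ∈ R : deg g < m and f·g ∈ R·f}`. -/
theorem petit_nuclei {S R : Type*} [Ring S] [Ring R]
    (σ : S →+* S) (δ : S →+ S) (hσ : Function.Injective σ)
    (hδ : ∀ a b : S, δ (a * b) = σ a * δ b + δ a * b)
    (P : SkewPolyRing S R σ δ) (f : R) (m : ℕ) (hm : 2 ≤ m)
    (hf : P.MonicDeg f m) (modr : R → R) (hmodr : P.IsModr f m modr)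
    -- `S_f` is not associative:
    (hna : ¬ ∀ g h k : R, P.degLT g m → P.degLT h m → P.degLT k m →
        modr (modr (g * h) * k) = modr (g * modr (h * k))) :
    -- `S ⊆ Nuc_l(S_f)`:
    (∀ (a : S) (h k : R), P.degLT h m → P.degLT k m →
        modr (modr (P.ι a * h) * k) = modr (P.ι a * modr (h * k))) ∧
    -- `S ⊆ Nuc_m(S_f)`:
    (∀ (a : S) (g k : R), P.degLT g m → P.degLT k m →
        modr (modr (g * P.ι a) * k) = modr (g * modr (P.ι a * k))) ∧
    -- `Nuc_r(S_f) = {g : deg g < m ∧ f·g ∈ R·f}`: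
    (∀ g : R, P.degLT g m →
      ((∀ x y : R, P.degLT x m → P.degLT y m →
          modr (modr (x * y) * g) = modr (x * modr (y * g))) ↔
        ∃ q : R, f * g = q * f)) :=
  petit_nuclei_general σ δ P f m hm hf modr hmodr
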